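/- arXiv:2209.02135 — 3 statements merged into one kernel-verified Lean document; each statement's English description precedes it below -/
import Mathlib

section
/- For fixed natural numbers u and v with 1 ≤ v ≤ u, the limit as α → 0⁺ of C(u, v; α)/α^v equals the signless Stirling number of the first kind |s(u, v)|. -/
open Finset

noncomputable def risingFactorial (x : ℝ) (u : ℕ) : ℝ :=
  ∏ j ∈ Finset.range u, (x + j)

noncomputable def genFacCoef (u v : ℕ) (a : ℝ) : ℝ :=
  (1 / (v.factorial : ℝ)) *
    ∑ i ∈ Finset.range (v + 1),
      (-1 : ℝ) ^ i * (v.choose i : ℝ) * risingFactorial (-(i * a)) u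

def stirling1 : ℕ → ℕ → ℕ
  | 0, 0 => 1
  | 0, _ + 1 => 0
  | _ + 1, 0 => 0
  | u + 1, v + 1 => u * stirling1 u (v + 1) + stirling1 u v

/-!
Substituting `x = -iα` into `(x)_(u) = ∑ₖ |s(u,k)| xᵏ` writes `C(u, v; α)` as a polynomial
in `α` whose `k`-th coefficient is `(-1)ᵏ |s(u,k)| / v!` times the alternating sum
`∑ᵢ (-1)ⁱ binom(v,i) iᵏ = (-1)ᵛ Δᵛ(xᵏ)(0)`. Since `Δᵛ` kills powers below `v` and sends
`xᵛ` to `v!`, this polynomial is `αᵛ` times a polynomial whose value at `0` is `|s(u,v)|`.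
-/

open Polynomial Filter Topology

theorem stirling1_eq_stirlingFirst : stirling1 = Nat.stirlingFirst := by
  funext n k
  induction n generalizing k with
  | zero => cases k <;> rfl
  | succ n ih =>
    cases k with
    | zero => rfl
    | succ k => rw [stirling1, Nat.stirlingFirst_succ_succ, ih, ih]

theorem Polynomial.coeff_ascPochhammer {S : Type*} [Semiring S] (n k : ℕ) :
    (ascPochhammer S n).coeff k = Nat.stirlingFirst n k := by
  induction n generalizing k with
  | zero => cases k <;> simp [coeff_one]
  | succ n ih =>
    rw [ascPochhammer_succ_right, mul_add, coeff_add, ← C_eq_natCast, coeff_mul_C]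
    cases k with
    | zero => cases n <;> simp [ih]
    | succ k =>
      rw [coeff_mul_X, ih, ih, Nat.stirlingFirst_succ_succ]
      push_cast
      rw [add_comm, Nat.cast_comm]

theorem risingFactorial_eq_eval_ascPochhammer (x : ℝ) (u : ℕ) :
    risingFactorial x u = (ascPochhammer ℝ u).eval x := by
  induction u with
  | zero => simp [risingFactorial]
  | succ u ih =>
    rw [risingFactorial, prod_range_succ, ← risingFactorial, ih, ascPochhammer_succ_eval]

section AlternatingSum

variable {R : Type*} [CommRing R]

theorem sum_range_neg_one_pow_mul_choose_mul_eq_fwdDiff_iter (f : R → R) (n : ℕ) :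
    ∑ i ∈ range (n + 1), (-1) ^ i * (n.choose i : R) * f i =
      (-1) ^ n * (fwdDiff 1)^[n] f 0 := by
  rw [fwdDiff_iter_eq_sum_shift, mul_sum]
  refine sum_congr rfl fun i hi => ?_
  have hin : i ≤ n := Nat.lt_succ_iff.mp (mem_range.mp hi)
  have hsign : (-1 : R) ^ n * (-1) ^ (n - i) = (-1) ^ i := by
    rw [← pow_add, show n + (n - i) = i + 2 * (n - i) by omega, pow_add, pow_mul]
    simp
  simp only [zsmul_eq_mul, Int.cast_mul, Int.cast_pow, Int.cast_neg, Int.cast_one,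
    Int.cast_natCast, zero_add, nsmul_eq_mul, mul_one]
  rw [← mul_assoc, ← mul_assoc, hsign]

theorem sum_range_neg_one_pow_mul_choose_mul_pow_of_lt {n k : ℕ} (h : k < n) :
    ∑ i ∈ range (n + 1), (-1) ^ i * (n.choose i : R) * (i : R) ^ k = 0 := by
  rw [sum_range_neg_one_pow_mul_choose_mul_eq_fwdDiff_iter (· ^ k),
    fwdDiff_iter_pow_eq_zero_of_lt h, Pi.zero_apply, mul_zero]

theorem sum_range_neg_one_pow_mul_choose_mul_pow_self (n : ℕ) :
    ∑ i ∈ range (n + 1), (-1) ^ i * (n.choose i : R) * (i : R) ^ n =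
      (-1) ^ n * n.factorial := by
  rw [sum_range_neg_one_pow_mul_choose_mul_eq_fwdDiff_iter (· ^ n), fwdDiff_iter_eq_factorial]
  rfl

end AlternatingSum

theorem Polynomial.tendsto_eval_div_pow_of_coeff_eq_zero {𝕜 : Type*} [NormedField 𝕜]
    {p : 𝕜[X]} {v : ℕ} (hp : ∀ k < v, p.coeff k = 0) :
    Tendsto (fun x => p.eval x / x ^ v) (𝓝[≠] 0) (𝓝 (p.coeff v)) := by
  obtain ⟨q, rfl⟩ := X_pow_dvd_iff.mpr hp
  rw [coeff_X_pow_mul', if_pos le_rfl, Nat.sub_self, coeff_zero_eq_eval_zero]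
  refine ((q.continuous.tendsto 0).mono_left nhdsWithin_le_nhds).congr' ?_
  filter_upwards [self_mem_nhdsWithin] with x hx
  rw [eval_mul, eval_pow, eval_X, mul_div_cancel_left₀ _ (pow_ne_zero v hx)]

noncomputable def genFacCoefPoly (u v : ℕ) : ℝ[X] :=
  C (v.factorial : ℝ)⁻¹ * ∑ i ∈ range (v + 1),
    C ((-1) ^ i * (v.choose i : ℝ)) * (ascPochhammer ℝ u).comp (C (-(i : ℝ)) * X)

theorem eval_genFacCoefPoly (u v : ℕ) (a : ℝ) :
    (genFacCoefPoly u v).eval a = genFacCoef u v a := by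
  simp only [genFacCoefPoly, genFacCoef, eval_mul, eval_C, eval_finsetSum, eval_comp, eval_X,
    risingFactorial_eq_eval_ascPochhammer, one_div, neg_mul]

theorem coeff_genFacCoefPoly (u v k : ℕ) :
    (genFacCoefPoly u v).coeff k = (v.factorial : ℝ)⁻¹ * stirling1 u k * (-1) ^ k *
      ∑ i ∈ range (v + 1), (-1) ^ i * (v.choose i : ℝ) * (i : ℝ) ^ k := by
  simp only [genFacCoefPoly, coeff_C_mul, finsetSum_coeff, comp_C_mul_X_coeff,
    coeff_ascPochhammer, stirling1_eq_stirlingFirst, mul_sum]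
  refine sum_congr rfl fun i _ => by rw [neg_pow]; ring

theorem coeff_genFacCoefPoly_of_lt (u : ℕ) {v k : ℕ} (h : k < v) :
    (genFacCoefPoly u v).coeff k = 0 := by
  rw [coeff_genFacCoefPoly, sum_range_neg_one_pow_mul_choose_mul_pow_of_lt h, mul_zero]

theorem coeff_genFacCoefPoly_self (u v : ℕ) : (genFacCoefPoly u v).coeff v = stirling1 u v := by
  rw [coeff_genFacCoefPoly, sum_range_neg_one_pow_mul_choose_mul_pow_self]
  have hv : (v.factorial : ℝ) ≠ 0 := by positivity
  field_simp
  rw [← pow_mul, mul_comm v, pow_mul, neg_one_sq, one_pow, mul_one]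

theorem genFacCoef_div_pow_tendsto_stirling1_general (u v : ℕ) :
    Filter.Tendsto (fun α : ℝ => genFacCoef u v α / α ^ v)
      (nhdsWithin 0 (Set.Ioi 0)) (nhds (stirling1 u v : ℝ)) := by
  have h :=
    tendsto_eval_div_pow_of_coeff_eq_zero (v := v) fun _ => coeff_genFacCoefPoly_of_lt u
  simp only [coeff_genFacCoefPoly_self, eval_genFacCoefPoly] at h
  exact h.mono_left (nhdsWithin_mono _ fun _ hx => ne_of_gt hx)

theorem genFacCoef_div_pow_tendsto_stirling1 (u v : ℕ) (hv1 : 1 ≤ v) (hvu : v ≤ u) :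
    Filter.Tendsto (fun α : ℝ => genFacCoef u v α / α ^ v)
      (nhdsWithin 0 (Set.Ioi 0)) (nhds (stirling1 u v : ℝ)) :=
  genFacCoef_div_pow_tendsto_stirling1_general u v
end

section
/- Let θ > 0, J ≥ 1 an integer, n ≥ 1, and c₁,…,c_J nonnegative integers summing to n. Define p̃_r = (θ/J)·r!/(θ+n) · Σ_{j=1}^{J} binom(c_j, r) · (θ/J)_{(c_j - r)} / (θ/J)_{(c_j)} for r ≥ 1. Then the sum Σ_{r≥1} ((θ+n)/r) · p̃_r equals -θ·ψ(1 - θ/J) + (θ/J)·Σ_{j=1}^{J} ψ(1 - θ/J - c_j), where ψ is the digamma function, provided θ/J is not a nonnegative integer. -/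
open Finset

noncomputable def digamma (x : ℝ) : ℝ := deriv (fun y => Real.log (Real.Gamma y)) x

/-!
The sum over `r` splits into one finite sum per bucket `j`. With `a = θ / J`, a bucket of size `m`
contributes `a T m / (a)_m`, where `T m = ∑_{r ≥ 1} (r-1)! C(m,r) (a)_{m-r}`; Pascal's rule gives
`T (m+1) = (a + m) T m + (a)_m`, hence `T m / (a)_m = ∑_{k < m} 1 / (a + k)`. On the other side,
iterating `ψ (x + 1) = ψ x + 1 / x` gives `ψ (1 - a - m) = ψ (1 - a) + ∑_{k < m} 1 / (a + k)`, and
the `J` copies of `a ψ (1 - a)` cancel against `-θ ψ (1 - a)`.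
-/

open scoped Nat

lemma ne_intCast_of_pos_of_forall_ne_natCast {a : ℝ} (ha : 0 < a) (h : ∀ m : ℕ, a ≠ m)
    (k : ℤ) : a ≠ k := by
  obtain ⟨m, rfl | rfl⟩ := Int.eq_nat_or_neg k
  · exact_mod_cast h m
  · push_cast
    linarith [(m.cast_nonneg : (0 : ℝ) ≤ m)]

lemma risingFactorial_succ (x : ℝ) (k : ℕ) :
    risingFactorial x (k + 1) = risingFactorial x k * (x + k) :=
  prod_range_succ _ _

lemma risingFactorial_ne_zero {x : ℝ} (hx : ∀ k : ℕ, x ≠ -k) (m : ℕ) :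
    risingFactorial x m ≠ 0 :=
  prod_ne_zero_iff.2 fun k _ h => hx k (eq_neg_of_add_eq_zero_left h)

lemma digamma_add_one {x : ℝ} (hx : ∀ m : ℕ, x ≠ -m) :
    digamma (x + 1) = digamma x + x⁻¹ := by
  have hx0 : x ≠ 0 := by simpa using hx 0
  have hΓ : DifferentiableAt ℝ Real.Gamma x := Real.differentiableAt_Gamma hx
  have hΓ0 : Real.Gamma x ≠ 0 := Real.Gamma_ne_zero hx
  have hlog : (fun y => Real.log (Real.Gamma (y + 1)))
      =ᶠ[nhds x] fun y => Real.log y + Real.log (Real.Gamma y) := by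
    filter_upwards [eventually_ne_nhds hx0, hΓ.continuousAt.eventually_ne hΓ0] with y hy hΓy
    rw [Real.Gamma_add_one hy, Real.log_mul hy hΓy]
  rw [digamma, ← deriv_comp_add_const, hlog.deriv_eq,
    deriv_fun_add (Real.differentiableAt_log hx0) (hΓ.log hΓ0), Real.deriv_log, digamma, add_comm]

lemma digamma_one_sub_sub_nat {a : ℝ} (ha : ∀ k : ℤ, a ≠ k) (m : ℕ) :
    digamma (1 - a - m) = digamma (1 - a) + ∑ k ∈ range m, (a + k)⁻¹ := by
  induction m with
  | zero => simp
  | succ m ih =>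
    have hx : ∀ k : ℕ, 1 - a - (m + 1 : ℕ) ≠ -k := fun k h =>
      ha (k - m) (by push_cast at h ⊢; linarith)
    have hstep := digamma_add_one hx
    have hshift : 1 - a - ((m + 1 : ℕ) : ℝ) + 1 = 1 - a - m := by push_cast; ring
    have hinv : (1 - a - ((m + 1 : ℕ) : ℝ))⁻¹ = -(a + m)⁻¹ := by
      rw [← inv_neg]; push_cast; ring_nf
    rw [hshift, hinv, ih] at hstep
    rw [sum_range_succ]
    linarith

lemma sum_factorial_mul_choose_mul_risingFactorial_succ (a : ℝ) (m : ℕ) :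
    ∑ r ∈ range (m + 1), (r ! : ℝ) * (m + 1).choose (r + 1) * risingFactorial a (m + 1 - (r + 1))
      = (a + m) * ∑ r ∈ range m, (r ! : ℝ) * m.choose (r + 1) * risingFactorial a (m - (r + 1))
        + risingFactorial a m := by
  have hterm : ∀ r ∈ range m,
      ((r + 1)! : ℝ) * m.choose (r + 1) * risingFactorial a (m - (r + 1))
        + r ! * m.choose (r + 1) * risingFactorial a (m - r)
      = (a + m) * (r ! * m.choose (r + 1) * risingFactorial a (m - (r + 1))) := by
    intro r hr
    obtain ⟨d, rfl⟩ := Nat.exists_eq_add_of_lt (mem_range.1 hr)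
    rw [show r + d + 1 - r = d + 1 by omega, show r + d + 1 - (r + 1) = d by omega,
      risingFactorial_succ, Nat.factorial_succ]
    push_cast
    ring
  have hpascal : ∀ r ∈ range (m + 1),
      (r ! : ℝ) * (m + 1).choose (r + 1) * risingFactorial a (m + 1 - (r + 1))
      = r ! * m.choose r * risingFactorial a (m - r)
        + r ! * m.choose (r + 1) * risingFactorial a (m - r) := by
    intro r _
    rw [Nat.choose_succ_succ, Nat.add_sub_add_right]
    push_cast
    ring
  rw [sum_congr rfl hpascal, sum_add_distrib, sum_range_succ', sum_range_succ, mul_sum,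
    ← sum_congr rfl hterm, sum_add_distrib]
  simp only [Nat.factorial_zero, Nat.cast_one, Nat.choose_zero_right, mul_one, tsub_zero,
    one_mul, Nat.choose_succ_self, CharP.cast_eq_zero, mul_zero, tsub_self, zero_mul, add_zero]
  ring

lemma sum_factorial_mul_choose_mul_risingFactorial {a : ℝ} (ha : ∀ k : ℕ, a ≠ -k) (m : ℕ) :
    ∑ r ∈ range m, (r ! : ℝ) * m.choose (r + 1) * risingFactorial a (m - (r + 1))
      = risingFactorial a m * ∑ k ∈ range m, (a + k)⁻¹ := by
  induction m with
  | zero => simp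
  | succ m ih =>
    have ham : a + m ≠ 0 := fun h => ha m (eq_neg_of_add_eq_zero_left h)
    rw [sum_factorial_mul_choose_mul_risingFactorial_succ, ih, risingFactorial_succ,
      sum_range_succ]
    field_simp

/-- At `r = 0` the factor `r ! / r` is `1 / 0 = 0`; this plays the role of the estimator's
`if 1 ≤ r`. -/
lemma hasSum_factorial_div_mul_choose_mul_risingFactorial_div {a : ℝ} (ha : ∀ k : ℕ, a ≠ -k)
    (m : ℕ) :
    HasSum (fun r : ℕ => a * (r ! / r) * m.choose r * risingFactorial a (m - r)
        / risingFactorial a m)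
      (a * ∑ k ∈ range m, (a + k)⁻¹) := by
  have hvanish : ∀ r ∉ range (m + 1),
      a * (r ! / r) * m.choose r * risingFactorial a (m - r) / risingFactorial a m = 0 := by
    intro r hr
    rw [Nat.choose_eq_zero_of_lt (by simpa using hr)]
    simp
  convert (hasSum_sum_of_ne_finset_zero hvanish : HasSum _ _) using 1
  have hclosed : ∑ k ∈ range m, (a + k)⁻¹
      = (∑ r ∈ range m, (r ! : ℝ) * m.choose (r + 1) * risingFactorial a (m - (r + 1)))
        / risingFactorial a m := by
    rw [sum_factorial_mul_choose_mul_risingFactorial ha,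
      mul_div_cancel_left₀ _ (risingFactorial_ne_zero ha m)]
  rw [sum_range_succ', hclosed, mul_div_assoc', mul_sum, sum_div]
  simp only [CharP.cast_eq_zero, div_zero, mul_zero, zero_mul, zero_div, add_zero]
  refine sum_congr rfl fun r _ => ?_
  rw [Nat.factorial_succ]
  push_cast
  field_simp

theorem sum_distinct_estimators_eq_digamma_general (θ : ℝ) (hθ : 0 < θ) (J : ℕ)
    (n : ℕ) (c : Fin J → ℕ)
    (hnp : ∀ m : ℕ, θ / J ≠ m) :
    (∑' r : ℕ, if 1 ≤ r then
        ((θ + n) / r) *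
          ((θ / J) * (r.factorial : ℝ) / (θ + n) *
            ∑ j, ((c j).choose r : ℝ) * risingFactorial (θ / J) (c j - r)
              / risingFactorial (θ / J) (c j))
      else 0)
      = -θ * digamma (1 - θ / J) + (θ / J) * ∑ j, digamma (1 - θ / J - (c j : ℝ)) := by
  have hJ : (0 : ℝ) < J := Nat.cast_pos.2 (Nat.pos_of_ne_zero fun h => hnp 0 (by simp [h]))
  have hθn : θ + n ≠ 0 := by positivity
  have ha := ne_intCast_of_pos_of_forall_ne_natCast (div_pos hθ hJ) hnp
  set a := θ / J
  have ha' : ∀ k : ℕ, a ≠ -k := fun k h => ha (-k) (by simpa using h)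
  have hbuckets := hasSum_sum fun j (_ : j ∈ univ) =>
    hasSum_factorial_div_mul_choose_mul_risingFactorial_div ha' (c j)
  calc _ = ∑ j, a * ∑ k ∈ range (c j), (a + k)⁻¹ := by
        rw [← hbuckets.tsum_eq]
        congr 1
        funext r
        split_ifs with hr
        · rw [mul_sum, mul_sum]
          refine sum_congr rfl fun j _ => ?_
          field_simp
        · simp only [show r = 0 by omega, CharP.cast_eq_zero, div_zero, mul_zero, zero_mul,
            zero_div, sum_const_zero]
    _ = -θ * digamma (1 - a) + a * ∑ j, digamma (1 - a - (c j : ℝ)) := by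
        simp_rw [digamma_one_sub_sub_nat ha, sum_add_distrib, sum_const]
        rw [card_univ, Fintype.card_fin, nsmul_eq_mul, mul_add, ← mul_assoc,
          div_mul_cancel₀ θ hJ.ne', mul_sum]
        ring

theorem sum_distinct_estimators_eq_digamma (θ : ℝ) (hθ : 0 < θ) (J : ℕ) (hJ : 1 ≤ J)
    (n : ℕ) (hn : 1 ≤ n) (c : Fin J → ℕ) (hc : ∑ j, c j = n)
    (hnp : ∀ m : ℕ, θ / J ≠ m) :
    (∑' r : ℕ, if 1 ≤ r then
        ((θ + n) / r) *
          ((θ / J) * (r.factorial : ℝ) / (θ + n) *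
            ∑ j, ((c j).choose r : ℝ) * risingFactorial (θ / J) (c j - r)
              / risingFactorial (θ / J) (c j))
      else 0)
      = -θ * digamma (1 - θ / J) + (θ / J) * ∑ j, digamma (1 - θ / J - (c j : ℝ)) :=
  sum_distinct_estimators_eq_digamma_general θ hθ J n c hnp
end

section
/- Fix natural numbers n ≥ 1, J ≥ 1, θ > 0, and nonnegative integers c₁,…,c_J summing to n. Then the limit as α → 0⁺ of Σ_{i ∈ I} ((θ/α)_{(|i|)} / J^{|i|}) · Π_{j=1}^{J} C(c_j, i_j; α), where I = Π_{j=1}^{J} {0,1,…,c_j} and |i| = i₁+…+i_J, equals Π_{j=1}^{J} (θ/J)_{(c_j)}. -/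
open Finset

lemma rf_zero' (x : ℝ) : risingFactorial x 0 = 1 := by simp [risingFactorial]

lemma rf_succ (x : ℝ) (u : ℕ) : risingFactorial x (u + 1) = risingFactorial x u * (x + u) := by
  simp [risingFactorial, Finset.prod_range_succ]

lemma gfc_zero_zero (a : ℝ) : genFacCoef 0 0 a = 1 := by
  simp [genFacCoef, rf_zero']

lemma gfc_zero_succ (v : ℕ) (a : ℝ) : genFacCoef 0 (v + 1) a = 0 := by
  have h := Int.alternating_sum_range_choose_of_ne (n := v + 1) (by omega)
  have h2 : ∑ i ∈ Finset.range (v + 2), (-1 : ℝ) ^ i * ((v+1).choose i : ℝ) = 0 := by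
    have := congrArg (Int.cast : ℤ → ℝ) h
    push_cast at this
    simpa using this
  simp [genFacCoef, rf_zero', h2]

lemma gfc_succ_zero (u : ℕ) (a : ℝ) : genFacCoef (u + 1) 0 a = 0 := by
  simp [genFacCoef, risingFactorial, Finset.prod_range_succ']

lemma gfc_rec (u v : ℕ) (a : ℝ) :
    genFacCoef (u + 1) (v + 1) a
      = (u - (v + 1) * a) * genFacCoef u (v + 1) a + a * genFacCoef u v a := by
  have key : ∀ i ∈ Finset.range (v + 2),
      (-1 : ℝ) ^ i * ((v+1).choose i : ℝ) * risingFactorial (-(i * a)) (u + 1)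
        = ((u : ℝ) - (v + 1) * a) * ((-1 : ℝ) ^ i * ((v+1).choose i : ℝ) * risingFactorial (-(i * a)) u)
          + a * (v + 1) * ((-1 : ℝ) ^ i * (v.choose i : ℝ) * risingFactorial (-(i * a)) u) := by
    intro i hi
    rw [rf_succ]
    have hile : i ≤ v + 1 := by simpa [Nat.lt_succ_iff] using Finset.mem_range.mp hi
    have hch : (((v+1).choose i : ℕ) : ℝ) * ((v + 1 : ℝ) - i) = (v + 1) * (v.choose i : ℝ) := by
      have h := Nat.choose_mul_succ_eq v i
      have h2 := congrArg (fun m : ℕ => (m : ℝ)) h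
      push_cast [Nat.cast_sub hile] at h2
      linarith
    linear_combination ((-1:ℝ)^i * risingFactorial (-(i*a)) u * a) * hch
  unfold genFacCoef
  rw [Finset.sum_congr rfl key, Finset.sum_add_distrib, ← Finset.mul_sum, ← Finset.mul_sum,
    Finset.sum_range_succ (f := fun i => (-1:ℝ)^i * (v.choose i : ℝ) * risingFactorial (-(i*a)) u),
    Nat.choose_succ_self]
  have hf : ((v+1).factorial : ℝ) = (v+1) * (v.factorial : ℝ) := by
    rw [Nat.factorial_succ]; push_cast; ring
  have hv0 : (v.factorial : ℝ) ≠ 0 := by exact_mod_cast v.factorial_ne_zero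
  rw [hf]
  field_simp
  try ring

noncomputable def Daux : ℕ → ℕ → ℝ → ℝ
  | 0, 0, _ => 1
  | 0, _ + 1, _ => 0
  | _ + 1, 0, _ => 0
  | u + 1, v + 1, a => Daux u v a + ((u : ℝ) - (v + 1) * a) * Daux u (v + 1) a

lemma gfc_eq_pow_mul_Daux : ∀ u v : ℕ, ∀ a : ℝ, genFacCoef u v a = a ^ v * Daux u v a := by
  intro u
  induction u with
  | zero =>
    intro v a
    cases v with
    | zero => simp [gfc_zero_zero, Daux]
    | succ v => simp [gfc_zero_succ, Daux]
  | succ u ih =>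
    intro v a
    cases v with
    | zero => simp [gfc_succ_zero, Daux]
    | succ v =>
      rw [gfc_rec, ih, ih, show Daux (u+1) (v+1) a = Daux u v a + ((u : ℝ) - (v + 1) * a) * Daux u (v + 1) a from rfl]
      ring

lemma Daux_continuous : ∀ u v : ℕ, Continuous (fun a : ℝ => Daux u v a) := by
  intro u
  induction u with
  | zero =>
    intro v
    cases v with
    | zero => exact continuous_const
    | succ v => exact continuous_const
  | succ u ih =>
    intro v
    cases v with
    | zero => exact continuous_const
    | succ v =>
      show Continuous fun a : ℝ => Daux u v a + ((u : ℝ) - (v + 1) * a) * Daux u (v + 1) a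
      exact (ih v).add ((continuous_const.sub (continuous_const.mul continuous_id)).mul (ih (v+1)))

lemma Daux_zero_eq : ∀ u v : ℕ, Daux u v 0 = (stirling1 u v : ℝ) := by
  intro u
  induction u with
  | zero =>
    intro v
    cases v with
    | zero => simp [Daux, stirling1]
    | succ v => simp [Daux, stirling1]
  | succ u ih =>
    intro v
    cases v with
    | zero => simp [Daux, stirling1]
    | succ v =>
      show Daux u v 0 + ((u : ℝ) - (v + 1) * 0) * Daux u (v + 1) 0 = (stirling1 (u+1) (v+1) : ℝ)
      rw [ih, ih, show stirling1 (u+1) (v+1) = u * stirling1 u (v + 1) + stirling1 u v from rfl]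
      push_cast
      ring

lemma stirling1_eq_zero : ∀ u v : ℕ, u < v → stirling1 u v = 0 := by
  intro u
  induction u with
  | zero => intro v hv; cases v with
    | zero => omega
    | succ v => rfl
  | succ u ih =>
    intro v hv
    cases v with
    | zero => omega
    | succ v =>
      show u * stirling1 u (v + 1) + stirling1 u v = 0
      rw [ih (v+1) (by omega), ih v (by omega)]
      ring

lemma stirling_sum (u : ℕ) (x : ℝ) :
    ∑ v ∈ Finset.range (u + 1), (stirling1 u v : ℝ) * x ^ v = risingFactorial x u := by
  induction u with
  | zero => simp [stirling1, risingFactorial]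
  | succ u ih =>
    rw [rf_succ, ← ih]
    rw [Finset.sum_range_succ' (fun v => (stirling1 (u+1) v : ℝ) * x ^ v)]
    have hs0 : stirling1 (u+1) 0 = 0 := rfl
    have hrec : ∀ v, (stirling1 (u+1) (v+1) : ℝ) = u * stirling1 u (v+1) + stirling1 u v := by
      intro v
      rw [show stirling1 (u+1) (v+1) = u * stirling1 u (v + 1) + stirling1 u v from rfl]
      push_cast; ring
    simp only [hrec, hs0, Nat.cast_zero, pow_zero, mul_one, add_zero]
    have hsplit : ∑ v ∈ Finset.range (u+1),
        ((u : ℝ) * stirling1 u (v+1) + stirling1 u v) * x ^ (v+1)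
        = (u : ℝ) * ∑ v ∈ Finset.range (u+1), (stirling1 u (v+1) : ℝ) * x ^ (v+1)
          + ∑ v ∈ Finset.range (u+1), (stirling1 u v : ℝ) * x ^ (v+1) := by
      rw [Finset.mul_sum, ← Finset.sum_add_distrib]
      apply Finset.sum_congr rfl; intro v _; ring
    rw [hsplit]
    have h1 : ∑ v ∈ Finset.range (u+1), (stirling1 u (v+1) : ℝ) * x ^ (v+1)
        = ∑ v ∈ Finset.range u, (stirling1 u (v+1) : ℝ) * x ^ (v+1) := by
      rw [Finset.sum_range_succ, stirling1_eq_zero u (u+1) (by omega)]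
      simp
    have h2 : ∑ v ∈ Finset.range (u+1), (stirling1 u v : ℝ) * x ^ v
        = ∑ v ∈ Finset.range u, (stirling1 u (v+1) : ℝ) * x ^ (v+1) + (stirling1 u 0 : ℝ) := by
      rw [Finset.sum_range_succ' (fun v => (stirling1 u v : ℝ) * x ^ v)]
      simp
    have h3 : ∑ v ∈ Finset.range (u+1), (stirling1 u v : ℝ) * x ^ (v+1)
        = x * ∑ v ∈ Finset.range (u+1), (stirling1 u v : ℝ) * x ^ v := by
      rw [Finset.mul_sum]
      apply Finset.sum_congr rfl; intro v _; ring
    have hu0 : (u : ℝ) * (stirling1 u 0 : ℝ) = 0 := by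
      cases u with
      | zero => simp
      | succ u => simp [show stirling1 (u+1) 0 = 0 from rfl]
    rw [h1, h3]
    have h4 : ∑ v ∈ Finset.range u, (stirling1 u (v+1) : ℝ) * x ^ (v+1)
        = ∑ v ∈ Finset.range (u+1), (stirling1 u v : ℝ) * x ^ v - (stirling1 u 0 : ℝ) := by
      rw [h2]; ring
    rw [h4]
    linear_combination -hu0

lemma rf_mul_pow (t a : ℝ) (ha : a ≠ 0) (m : ℕ) :
    risingFactorial (t / a) m * a ^ m = ∏ k ∈ Finset.range m, (t + k * a) := by
  rw [risingFactorial, show a ^ m = ∏ _k ∈ Finset.range m, a by simp, ← Finset.prod_mul_distrib]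
  apply Finset.prod_congr rfl
  intro k _
  field_simp
  try ring

theorem pyp_sketch_dist_tendsto_dirichlet_multinomial (n : ℕ) (hn : 1 ≤ n)
    (J : ℕ) (hJ : 1 ≤ J) (θ : ℝ) (hθ : 0 < θ) (c : Fin J → ℕ) (hc : ∑ j, c j = n) :
    Filter.Tendsto (fun α : ℝ =>
        ∑ i : (∀ j : Fin J, Fin (c j + 1)),
          risingFactorial (θ / α) (∑ j, (i j : ℕ)) / (J : ℝ) ^ (∑ j, (i j : ℕ)) *
            ∏ j, genFacCoef (c j) (i j) α)
      (nhdsWithin 0 (Set.Ioi 0))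
      (nhds (∏ j, risingFactorial (θ / J) (c j))) := by
  set m : (∀ j : Fin J, Fin (c j + 1)) → ℕ := fun i => ∑ j, (i j : ℕ) with hm
  set G : ℝ → ℝ := fun a => ∑ i : (∀ j : Fin J, Fin (c j + 1)),
      (∏ k ∈ Finset.range (m i), (θ + k * a)) / (J : ℝ) ^ (m i)
        * ∏ j, Daux (c j) (i j) a with hG
  have hGcont : Continuous G := by
    apply continuous_finset_sum
    intro i _
    exact ((continuous_finset_prod _ (fun k _ =>
        continuous_const.add (continuous_const.mul continuous_id))).div_const _).mul
      (continuous_finset_prod _ (fun j _ => Daux_continuous (c j) (i j)))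
  have hG0 : G 0 = ∏ j, risingFactorial (θ / J) (c j) := by
    have step : ∀ i : (∀ j : Fin J, Fin (c j + 1)),
        (∏ k ∈ Finset.range (m i), (θ + (k : ℝ) * 0)) / (J : ℝ) ^ (m i)
          * ∏ j, Daux (c j) (i j) 0
        = ∏ j, ((θ / J) ^ ((i j : ℕ)) * (stirling1 (c j) (i j) : ℝ)) := by
      intro i
      have h1 : (∏ k ∈ Finset.range (m i), (θ + (k : ℝ) * 0)) = θ ^ (m i) := by
        simp
      rw [h1, Finset.prod_mul_distrib, ← div_pow, hm,
        ← Finset.prod_pow_eq_pow_sum]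
      congr 1
      apply Finset.prod_congr rfl
      intro j _
      rw [Daux_zero_eq]
    rw [hG]
    simp only [step]
    rw [← Fintype.prod_sum (κ := fun j : Fin J => Fin (c j + 1))
      (f := fun (j : Fin J) (v : Fin (c j + 1)) => (θ / (J : ℝ)) ^ ((v : ℕ)) * (stirling1 (c j) (v : ℕ) : ℝ))]
    apply Finset.prod_congr rfl
    intro j _
    rw [Fin.sum_univ_eq_sum_range (fun v => (θ / J) ^ v * (stirling1 (c j) v : ℝ)),
      ← stirling_sum (c j) (θ / J)]
    apply Finset.sum_congr rfl
    intro v _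
    ring
  have htend : Filter.Tendsto G (nhdsWithin 0 (Set.Ioi 0))
      (nhds (∏ j, risingFactorial (θ / J) (c j))) := by
    rw [← hG0]
    exact (hGcont.tendsto 0).mono_left nhdsWithin_le_nhds
  apply htend.congr'
  filter_upwards [self_mem_nhdsWithin] with a ha
  have ha0 : a ≠ 0 := ne_of_gt ha
  rw [hG]
  apply Finset.sum_congr rfl
  intro i _
  have hm' : ∀ i : (∀ j : Fin J, Fin (c j + 1)), (∑ j, ((i j : ℕ))) = m i := fun _ => rfl
  rw [Finset.prod_congr rfl (fun j _ => gfc_eq_pow_mul_Daux (c j) (i j) a),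
    Finset.prod_mul_distrib, Finset.prod_pow_eq_pow_sum]
  simp only [hm']
  rw [← rf_mul_pow θ a ha0 (m i)]
  ring
end
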